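/- arXiv:1307.4033 — 2 statements merged into one kernel-verified Lean document; each statement's English description precedes it below -/
import Mathlib

section
/- Let L/K be a Galois field extension of degree 2 with nontrivial automorphism σ, and let A be an invertible n×n matrix over L satisfying A^σ · A = 1 (i.e. A^σ = A^{-1}). Then there exists an invertible n×n matrix B over L such that A = B^σ · B^{-1}. -/
/-!
The matrix `A` defines the `σ`-semilinear map `τ v = A v^σ` on `L^n`, and `A A^σ = 1` together
with `σ² = 1` (the automorphism group of a quadratic extension has order at most two) makes `τ`
an involution. For `v ∈ L^n` and `α` with `σ α ≠ α`, the vectors `v + τ v` and `α v + σ(α) τ v`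
are fixed by `τ` and recover `v`, so the fixed vectors span `L^n`. A basis of fixed vectors is
the set of columns of an invertible `P` with `A P^σ = P`, and `B = P^σ` works.
-/

theorem AlgEquiv.involutive_of_finrank_eq_two {K L : Type*} [Field K] [Field L] [Algebra K L]
    (hdeg : Module.finrank K L = 2) {σ : L ≃ₐ[K] L} (hσ : σ ≠ 1) : Function.Involutive σ := by
  have : FiniteDimensional K L := Module.finite_of_finrank_pos (by omega)
  have hcard : Fintype.card (L ≃ₐ[K] L) = 2 :=
    le_antisymm (hdeg ▸ AlgEquiv.card_le) (Fintype.one_lt_card_iff.2 ⟨σ, 1, hσ⟩)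
  have hsq : σ ^ 2 = 1 := hcard ▸ pow_card_eq_one
  exact fun x => DFunLike.congr_fun hsq x

theorem LinearMap.span_fixedPoints_eq_top_of_involutive {L V : Type*} [Field L] [AddCommGroup V]
    [Module L V] {σ : L →+* L} (hσ : Function.Involutive σ) {α : L} (hα : σ α ≠ α)
    {τ : V →ₛₗ[σ] V} (hτ : Function.Involutive τ) :
    Submodule.span L (Function.fixedPoints τ) = ⊤ := by
  refine Submodule.eq_top_iff'.2 fun v => ?_
  have h₁ : τ (v + τ v) = v + τ v := by rw [map_add, hτ, add_comm]
  have h₂ : τ (α • v + σ α • τ v) = α • v + σ α • τ v := by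
    rw [map_add, LinearMap.map_smulₛₗ, LinearMap.map_smulₛₗ, hτ, hσ, add_comm]
  have hv : v = (α - σ α)⁻¹ • ((α • v + σ α • τ v) - σ α • (v + τ v)) := by
    rw [smul_add, add_sub_add_right_eq_sub, ← sub_smul, inv_smul_smul₀ (sub_ne_zero.2 hα.symm)]
  rw [hv]
  exact Submodule.smul_mem _ _ (Submodule.sub_mem _ (Submodule.subset_span h₂)
    (Submodule.smul_mem _ _ (Submodule.subset_span h₁)))

namespace Matrix

variable {ι L : Type*} [Fintype ι] [Field L]

theorem exists_isUnit_forall_col_mem_of_span_eq_top [DecidableEq ι] {s : Set (ι → L)}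
    (hs : Submodule.span L s = ⊤) : ∃ P : Matrix ι ι L, IsUnit P ∧ ∀ j, P.col j ∈ s := by
  obtain ⟨t, hts, htspan, hli⟩ := exists_linearIndependent L s
  let b : Module.Basis t L (ι → L) := .mk hli (by rw [Subtype.range_coe, htspan, hs])
  let e : t ≃ ι := b.indexEquiv (Pi.basisFun L ι)
  refine ⟨(of fun j => (e.symm j : ι → L))ᵀ, linearIndependent_cols_iff_isUnit.1 ?_,
    fun j => hts (e.symm j).2⟩
  exact hli.comp _ e.symm.injective

def semilinearMulVec (σ : L →+* L) (A : Matrix ι ι L) : (ι → L) →ₛₗ[σ] (ι → L) where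
  toFun v := A *ᵥ (σ ∘ v)
  map_add' v w := by rw [← mulVec_add]; congr 1; ext i; simp
  map_smul' c v := by rw [← mulVec_smul]; congr 1; ext i; simp

variable {σ : L →+* L} {A : Matrix ι ι L}

theorem semilinearMulVec_apply (v : ι → L) : A.semilinearMulVec σ v = A *ᵥ (σ ∘ v) := rfl

theorem semilinearMulVec_involutive [DecidableEq ι] (hσ : Function.Involutive σ)
    (hA : A * A.map σ = 1) : Function.Involutive (A.semilinearMulVec σ) := by
  intro v
  have : σ ∘ (A *ᵥ (σ ∘ v)) = A.map σ *ᵥ v := by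
    ext i; rw [Function.comp_apply, RingHom.map_mulVec, ← Function.comp_assoc, hσ.comp_self]; rfl
  rw [semilinearMulVec_apply, semilinearMulVec_apply, this, mulVec_mulVec, hA, one_mulVec]

theorem mul_map_eq_self_iff {P : Matrix ι ι L} :
    A * P.map σ = P ↔ ∀ j, A.semilinearMulVec σ (P.col j) = P.col j := by
  simp only [← ext_iff, funext_iff, semilinearMulVec_apply, mulVec, dotProduct, mul_apply]
  exact ⟨fun h j i => h i j, fun h i j => h j i⟩

theorem exists_isUnit_mul_map_eq_self [DecidableEq ι] (hσ : Function.Involutive σ) {α : L}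
    (hα : σ α ≠ α) (hA : A * A.map σ = 1) : ∃ P : Matrix ι ι L, IsUnit P ∧ A * P.map σ = P := by
  obtain ⟨P, hP, hcol⟩ := exists_isUnit_forall_col_mem_of_span_eq_top
    (LinearMap.span_fixedPoints_eq_top_of_involutive hσ hα (semilinearMulVec_involutive hσ hA))
  exact ⟨P, hP, mul_map_eq_self_iff.2 hcol⟩

end Matrix

theorem hilbert90_matrix_existence_general {K L : Type*} [Field K] [Field L] [Algebra K L]
    (hdeg : Module.finrank K L = 2)
    (σ : L ≃ₐ[K] L) (hσ : σ ≠ 1)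
    {n : ℕ} (A : Matrix (Fin n) (Fin n) L)
    (hcoc : A.map σ * A = 1) :
    ∃ B : Matrix (Fin n) (Fin n) L, IsUnit B ∧ A = B.map σ * B⁻¹ := by
  have hinv : Function.Involutive σ := AlgEquiv.involutive_of_finrank_eq_two hdeg hσ
  obtain ⟨α, hα⟩ : ∃ α, σ α ≠ α := not_forall.1 fun h => hσ (AlgEquiv.ext h)
  obtain ⟨P, hP, hAP⟩ : ∃ P : Matrix (Fin n) (Fin n) L, IsUnit P ∧ A * P.map σ = P :=
    Matrix.exists_isUnit_mul_map_eq_self (σ := (σ : L →+* L)) hinv hα (mul_eq_one_comm.1 hcoc)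
  have hB : IsUnit (P.map σ) := hP.map (RingHom.mapMatrix (σ : L →+* L))
  have hBσ : (P.map σ).map σ = P := by rw [Matrix.map_map, hinv.comp_self, Matrix.map_id]
  refine ⟨P.map σ, hB, ?_⟩
  calc A = A * P.map σ * (P.map σ)⁻¹ :=
        (Matrix.mul_nonsing_inv_cancel_right _ _ ((Matrix.isUnit_iff_isUnit_det _).1 hB)).symm
    _ = (P.map σ).map σ * (P.map σ)⁻¹ := by rw [hAP, hBσ]

/-- **Hilbert's Theorem 90, matrix form (existence).**
Let `L/K` be a Galois field extension of degree 2 with nontrivial automorphism `σ`,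
and let `A` be an invertible `n × n` matrix over `L` satisfying `A^σ · A = 1`
(i.e. `A^σ = A⁻¹`).  Then there exists an invertible `n × n` matrix `B` over `L`
such that `A = B^σ · B⁻¹`. -/
theorem hilbert90_matrix_existence {K L : Type*} [Field K] [Field L] [Algebra K L]
    [IsGalois K L] (hdeg : Module.finrank K L = 2)
    (σ : L ≃ₐ[K] L) (hσ : σ ≠ 1)
    {n : ℕ} (A : Matrix (Fin n) (Fin n) L) (hA : IsUnit A)
    (hcoc : A.map σ * A = 1) :
    ∃ B : Matrix (Fin n) (Fin n) L, IsUnit B ∧ A = B.map σ * B⁻¹ :=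
  hilbert90_matrix_existence_general hdeg σ hσ A hcoc
end

section
/- Suppose m ≥ 2. The odd simple roots σ_0 = s − e_1, σ_1 = f − e_1 − e_2, σ_k = e_{k−1} − e_k (2 ≤ k ≤ m) are ℤ-linearly independent, and their ℤ-span is exactly the orthogonal complement of K in Λ'_m, i.e. { v ∈ Λ'_m : ⟨v, K⟩ = 0 }. In particular each simple root is orthogonal to K. -/
/-!
Pairing with `K` takes the value `-1` on `s` and on every `e_j`, and `-2` on `f`. Since
`s - e_1 = σ_0`, `f - 2 e_1 = σ_1 - σ_2` and `e_j - e_1 = -(σ_2 + ⋯ + σ_j)`, the vector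
`v + ⟨v, K⟩ e_1` lies in the root lattice for every basis vector `v`, hence for every `v`. This
gives the lattice as the orthogonal complement of `K`, and shows that the `m + 2` vectors
`e_1, σ_0, …, σ_m` span `ℤ^{m+2}`; over `ℤ` (a ring with the Orzech property) such a family is
a basis, so the roots are linearly independent.
-/

/-- The basis vector `s` of the lattice `Λ'_m = ℤ^{m+2}` (coordinate 0). -/
def sV (m : ℕ) : Fin (m + 2) → ℤ := fun i => if (i : ℕ) = 0 then 1 else 0

/-- The basis vector `f` of the lattice `Λ'_m = ℤ^{m+2}` (coordinate 1). -/
def fV (m : ℕ) : Fin (m + 2) → ℤ := fun i => if (i : ℕ) = 1 then 1 else 0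

/-- The basis vector `e_j` (for `1 ≤ j ≤ m`) of the lattice `Λ'_m = ℤ^{m+2}`
(coordinate `j+1`). -/
def eV (m j : ℕ) : Fin (m + 2) → ℤ := fun i => if (i : ℕ) = j + 1 then 1 else 0

/-- The odd intersection form on `Λ'_m`: `⟨s,s⟩ = −1`, `⟨s,f⟩ = 1`, `⟨f,f⟩ = 0`,
`⟨s,e_i⟩ = ⟨f,e_i⟩ = 0`, `⟨e_i,e_j⟩ = −δ_{ij}`. -/
def oddForm (m : ℕ) (u v : Fin (m + 2) → ℤ) : ℤ :=
  u 0 * v 1 + u 1 * v 0 - u 0 * v 0 -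
    ∑ i : Fin (m + 2), if 2 ≤ (i : ℕ) then u i * v i else 0

/-- The canonical class `K = −2s − 3f + Σ_{i=1}^m e_i` (odd case). -/
def oddK (m : ℕ) : Fin (m + 2) → ℤ :=
  (-2 : ℤ) • sV m + (-3 : ℤ) • fV m + ∑ j ∈ Finset.Icc 1 m, eV m j

/-- The odd simple roots: `σ_0 = s − e_1`, `σ_1 = f − e_1 − e_2`,
`σ_k = e_{k−1} − e_k` for `2 ≤ k ≤ m`. -/
def oddRoot (m k : ℕ) : Fin (m + 2) → ℤ :=
  if k = 0 then sV m - eV m 1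
  else if k = 1 then fV m - eV m 1 - eV m 2
  else eV m (k - 1) - eV m k

theorem oddForm_sV_left (m : ℕ) (w : Fin (m + 2) → ℤ) : oddForm m (sV m) w = w 1 - w 0 := by
  have hsum : (∑ i : Fin (m + 2), if 2 ≤ (i : ℕ) then sV m i * w i else 0) = 0 :=
    Finset.sum_eq_zero fun i _ => by simp only [sV]; split_ifs <;> omega
  rw [oddForm, hsum]
  simp [sV]

theorem oddForm_fV_left (m : ℕ) (w : Fin (m + 2) → ℤ) : oddForm m (fV m) w = w 0 := by
  have hsum : (∑ i : Fin (m + 2), if 2 ≤ (i : ℕ) then fV m i * w i else 0) = 0 :=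
    Finset.sum_eq_zero fun i _ => by simp only [fV]; split_ifs <;> omega
  rw [oddForm, hsum]
  simp [fV]

theorem oddForm_eV_left (m j : ℕ) (hj : 1 ≤ j) (hjm : j ≤ m) (w : Fin (m + 2) → ℤ) :
    oddForm m (eV m j) w = -w ⟨j + 1, by omega⟩ := by
  have hsum : (∑ i : Fin (m + 2), if 2 ≤ (i : ℕ) then eV m j i * w i else 0) =
      w ⟨j + 1, by omega⟩ := by
    refine (Finset.sum_congr rfl fun i _ => ?_).trans (Fintype.sum_ite_eq' _ w)
    simp only [eV, Fin.ext_iff]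
    split_ifs <;> omega
  have h0 : eV m j 0 = 0 := if_neg (by simp)
  have h1 : eV m j 1 = 0 := if_neg (by simp; omega)
  rw [oddForm, hsum, h0, h1]
  ring

theorem oddK_zero (m : ℕ) : oddK m 0 = -2 := by
  simp [oddK, sV, fV, eV]

theorem oddK_one (m : ℕ) : oddK m 1 = -3 := by
  simp [oddK, sV, fV, eV]

theorem oddK_eV (m j : ℕ) (hj : 1 ≤ j) (hjm : j ≤ m) : oddK m ⟨j + 1, by omega⟩ = 1 := by
  simp [oddK, sV, fV, eV, show j ≠ 0 by omega, hj, hjm]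

theorem oddRoot_zero (m : ℕ) : oddRoot m 0 = sV m - eV m 1 := by
  simp [oddRoot]

theorem oddRoot_one (m : ℕ) : oddRoot m 1 = fV m - eV m 1 - eV m 2 := by
  simp [oddRoot]

theorem oddRoot_of_two_le (m k : ℕ) (hk : 2 ≤ k) : oddRoot m k = eV m (k - 1) - eV m k := by
  simp [oddRoot, show k ≠ 0 by omega, show k ≠ 1 by omega]

def oddFormLeft (m : ℕ) (w : Fin (m + 2) → ℤ) : (Fin (m + 2) → ℤ) →ₗ[ℤ] ℤ where
  toFun u := oddForm m u w
  map_add' u u' := by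
    simp only [oddForm, Pi.add_apply, add_mul, ite_add_zero, Finset.sum_add_distrib]; ring
  map_smul' c u := by
    simp only [oddForm, Pi.smul_apply, smul_eq_mul, RingHom.id_apply, mul_assoc, ← mul_ite_zero,
      ← Finset.mul_sum]; ring

theorem oddFormLeft_apply (m : ℕ) (u w : Fin (m + 2) → ℤ) : oddFormLeft m w u = oddForm m u w :=
  rfl

theorem oddForm_sV_oddK (m : ℕ) : oddForm m (sV m) (oddK m) = -1 := by
  rw [oddForm_sV_left, oddK_zero, oddK_one]; norm_num

theorem oddForm_fV_oddK (m : ℕ) : oddForm m (fV m) (oddK m) = -2 := by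
  rw [oddForm_fV_left, oddK_zero]

theorem oddForm_eV_oddK (m j : ℕ) (hj : 1 ≤ j) (hjm : j ≤ m) :
    oddForm m (eV m j) (oddK m) = -1 := by
  rw [oddForm_eV_left m j hj hjm, oddK_eV m j hj hjm]

theorem oddForm_oddRoot_oddK (m k : ℕ) (hm : 2 ≤ m) (hk : k ≤ m) :
    oddForm m (oddRoot m k) (oddK m) = 0 := by
  rw [← oddFormLeft_apply]
  obtain rfl | rfl | hk2 : k = 0 ∨ k = 1 ∨ 2 ≤ k := by omega
  · simp only [oddRoot_zero, map_sub, oddFormLeft_apply, oddForm_sV_oddK,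
      oddForm_eV_oddK m 1 le_rfl (by omega), sub_self]
  · simp only [oddRoot_one, map_sub, oddFormLeft_apply, oddForm_fV_oddK,
      oddForm_eV_oddK m 1 le_rfl (by omega), oddForm_eV_oddK m 2 (by omega) hm]
    norm_num
  · simp only [oddRoot_of_two_le m k hk2, map_sub, oddFormLeft_apply,
      oddForm_eV_oddK m (k - 1) (by omega) (by omega), oddForm_eV_oddK m k (by omega) hk, sub_self]

def oddRoots (m : ℕ) (k : Fin (m + 1)) : Fin (m + 2) → ℤ := oddRoot m k

def oddRootLattice (m : ℕ) : Submodule ℤ (Fin (m + 2) → ℤ) :=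
  Submodule.span ℤ (Set.range (oddRoots m))

theorem oddRoot_mem_oddRootLattice (m k : ℕ) (hk : k ≤ m) : oddRoot m k ∈ oddRootLattice m :=
  Submodule.subset_span ⟨⟨k, by omega⟩, rfl⟩

theorem eV_sub_eV_one_mem_oddRootLattice (m j : ℕ) (hj : 1 ≤ j) (hjm : j ≤ m) :
    eV m j - eV m 1 ∈ oddRootLattice m := by
  induction j, hj using Nat.le_induction with
  | base => simp
  | succ j hj ih =>
    have h := Submodule.sub_mem _ (ih (by omega)) (oddRoot_mem_oddRootLattice m (j + 1) hjm)
    rw [oddRoot_of_two_le m (j + 1) (by omega), Nat.add_sub_cancel] at h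
    convert h using 1
    abel

theorem eq_top_of_sV_mem_of_fV_mem_of_eV_mem (m : ℕ) (S : Submodule ℤ (Fin (m + 2) → ℤ))
    (hs : sV m ∈ S) (hf : fV m ∈ S) (he : ∀ j, 1 ≤ j → j ≤ m → eV m j ∈ S) : S = ⊤ := by
  rw [eq_top_iff, ← (Pi.basisFun ℤ (Fin (m + 2))).span_eq, Submodule.span_le]
  rintro _ ⟨⟨i, hi⟩, rfl⟩
  rw [Pi.basisFun_apply, SetLike.mem_coe]
  rcases i with _ | _ | j
  · convert hs using 1
    ext i; simp only [sV, Pi.single_apply, Fin.ext_iff]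
  · convert hf using 1
    ext i; simp [fV, Pi.single_apply, Fin.ext_iff]
  · convert he (j + 1) (by omega) (by omega) using 1
    ext i; simp [eV, Pi.single_apply, Fin.ext_iff]

theorem add_smul_eV_one_mem_oddRootLattice (m : ℕ) (hm : 2 ≤ m) (v : Fin (m + 2) → ℤ) :
    v + oddForm m v (oddK m) • eV m 1 ∈ oddRootLattice m := by
  let ψ := LinearMap.id + (oddFormLeft m (oddK m)).smulRight (eV m 1)
  have hψ : (oddRootLattice m).comap ψ = ⊤ := by
    apply eq_top_of_sV_mem_of_fV_mem_of_eV_mem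
    · have h := oddRoot_mem_oddRootLattice m 0 (by omega)
      simp only [Submodule.mem_comap, ψ, LinearMap.add_apply, LinearMap.smulRight_apply,
        oddFormLeft_apply, oddForm_sV_oddK]
      rw [oddRoot_zero] at h
      convert h using 1
      module
    · have h := Submodule.sub_mem _ (oddRoot_mem_oddRootLattice m 1 (by omega))
        (oddRoot_mem_oddRootLattice m 2 hm)
      simp only [Submodule.mem_comap, ψ, LinearMap.add_apply, LinearMap.smulRight_apply,
        oddFormLeft_apply, oddForm_fV_oddK]
      rw [oddRoot_one, oddRoot_of_two_le m 2 le_rfl] at h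
      convert h using 1
      module
    · intro j hj hjm
      simp only [Submodule.mem_comap, ψ, LinearMap.add_apply, LinearMap.smulRight_apply,
        oddFormLeft_apply, oddForm_eV_oddK m j hj hjm, neg_one_smul, ← sub_eq_add_neg]
      exact eV_sub_eV_one_mem_oddRootLattice m j hj hjm
  exact hψ.ge (Submodule.mem_top (x := v))

theorem linearIndependent_oddRoots (m : ℕ) (hm : 2 ≤ m) : LinearIndependent ℤ (oddRoots m) := by
  have hspan : ⊤ ≤ Submodule.span ℤ (Set.range (Fin.cons (eV m 1) (oddRoots m))) := by
    intro v _
    rw [Fin.range_cons, Submodule.mem_span_insert]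
    exact ⟨-oddForm m v (oddK m), _, add_smul_eV_one_mem_oddRootLattice m hm v, by module⟩
  have hcard : Fintype.card (Fin (m + 2)) = Module.finrank ℤ (Fin (m + 2) → ℤ) := by simp
  exact (linearIndependent_of_top_le_span_of_card_eq_finrank hspan hcard).comp Fin.succ
    (Fin.succ_injective _)

theorem mem_oddRootLattice_iff (m : ℕ) (hm : 2 ≤ m) (v : Fin (m + 2) → ℤ) :
    v ∈ oddRootLattice m ↔ oddForm m v (oddK m) = 0 := by
  constructor
  · intro hv
    have hle : oddRootLattice m ≤ LinearMap.ker (oddFormLeft m (oddK m)) := by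
      rw [oddRootLattice, Submodule.span_le]
      rintro _ ⟨k, rfl⟩
      exact oddForm_oddRoot_oddK m k hm (by omega)
    exact hle hv
  · intro hv
    simpa [hv] using add_smul_eV_one_mem_oddRootLattice m hm v

/-- For `m ≥ 2`, the odd simple roots `σ_0 = s − e_1`, `σ_1 = f − e_1 − e_2`,
`σ_k = e_{k−1} − e_k` (`2 ≤ k ≤ m`) are `ℤ`-linearly independent, and their `ℤ`-span is
exactly the orthogonal complement of `K` in `Λ'_m`.  In particular each simple root is
orthogonal to `K`. -/
theorem odd_simple_roots_span_K_perp (m : ℕ) (hm : 2 ≤ m) :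
    LinearIndependent ℤ (fun k : Fin (m + 1) => oddRoot m (k : ℕ)) ∧
    (∀ v : Fin (m + 2) → ℤ,
      v ∈ Submodule.span ℤ (Set.range fun k : Fin (m + 1) => oddRoot m (k : ℕ)) ↔
        oddForm m v (oddK m) = 0) ∧
    (∀ k : Fin (m + 1), oddForm m (oddRoot m (k : ℕ)) (oddK m) = 0) :=
  ⟨linearIndependent_oddRoots m hm, mem_oddRootLattice_iff m hm,
    fun k => oddForm_oddRoot_oddK m k hm (by omega)⟩
end
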